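/- Let G be an instance of the rank-maximal matching problem, let a be an applicant vertex of G, and let H be obtained from G by deleting a together with all edges incident on a. If M is a rank-maximal matching of G and M' is a rank-maximal matching of H, then |M| − 1 ≤ |M'| ≤ |M|. -/

import Mathlib

open SimpleGraph

variable {V : Type*}

/-- `M` is a matching in the graph `G`: a set of edges of `G` no two of which
share a vertex. -/
def IsMatchingIn (G : SimpleGraph V) (M : Set (Sym2 V)) : Prop :=
  M ⊆ G.edgeSet ∧ ∀ e ∈ M, ∀ f ∈ M, e ≠ f → ∀ v : V, v ∈ e → v ∉ f

/-- A vertex `v` is matched (covered) by the matching `M`. -/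
def IsMatchedBy (M : Set (Sym2 V)) (v : V) : Prop :=
  ∃ e ∈ M, v ∈ e

/-- The list of edges of a path given as a list of vertices. -/
def pathEdges (p : List V) : List (Sym2 V) :=
  (p.zip p.tail).map fun q => s(q.1, q.2)

/-- `p` is an alternating path from `u` to `v` in `G` with respect to the matching `M`:
its consecutive vertices are adjacent in `G`, it repeats no vertex, and its edges
alternate between edges in `M` and edges not in `M`. -/
def IsAltPath (G : SimpleGraph V) (M : Set (Sym2 V)) (u v : V) (p : List V) : Prop :=
  p.Chain' G.Adj ∧ p.Nodup ∧
    (pathEdges p).Chain' (fun e f => (e ∈ M ↔ f ∉ M)) ∧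
    p.head? = some u ∧ p.getLast? = some v

/-- `v` is even with respect to `M`: there is an even-length alternating path from
an `M`-unmatched vertex to `v`. -/
def EvenVtx (G : SimpleGraph V) (M : Set (Sym2 V)) (v : V) : Prop :=
  ∃ u p, ¬ IsMatchedBy M u ∧ IsAltPath G M u v p ∧ Even (pathEdges p).length

/-- `v` is odd with respect to `M`: there is an odd-length alternating path from
an `M`-unmatched vertex to `v`. -/
def OddVtx (G : SimpleGraph V) (M : Set (Sym2 V)) (v : V) : Prop :=
  ∃ u p, ¬ IsMatchedBy M u ∧ IsAltPath G M u v p ∧ Odd (pathEdges p).length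

/-- `v` is unreachable with respect to `M`: there is no alternating path from any
`M`-unmatched vertex to `v`. -/
def UnreachableVtx (G : SimpleGraph V) (M : Set (Sym2 V)) (v : V) : Prop :=
  ¬ ∃ u p, ¬ IsMatchedBy M u ∧ IsAltPath G M u v p

/-- `M` is a maximum (cardinality) matching in `G`. -/
def IsMaxMatching (G : SimpleGraph V) (M : Set (Sym2 V)) : Prop :=
  IsMatchingIn G M ∧ ∀ N, IsMatchingIn G N → N.ncard ≤ M.ncard

/-- `G` is bipartite with the two sides given by `side`. -/
def IsBipartiteWith (G : SimpleGraph V) (side : V → Bool) : Prop :=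
  ∀ u v, G.Adj u v → side u ≠ side v

/-- The signature of a matching: `signature rank M i` is the number of edges of
rank `i` in `M`. -/
noncomputable def signature (rank : Sym2 V → ℕ) (M : Set (Sym2 V)) (i : ℕ) : ℕ :=
  {e ∈ M | rank e = i}.ncard

/-- Lexicographic comparison of signatures on coordinates `1, …, r`:
`SigGt r x y` means `x ≻ y`. -/
def SigGt (r : ℕ) (x y : ℕ → ℕ) : Prop :=
  ∃ k, 1 ≤ k ∧ k ≤ r ∧ (∀ j, 1 ≤ j → j < k → x j = y j) ∧ y k < x k

/-- `M` is a rank-maximal matching of the instance `(G, rank)` with ranks in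
`{1, …, r}`: no matching of `G` has a lexicographically greater signature. -/
def IsRankMaximal (G : SimpleGraph V) (rank : Sym2 V → ℕ) (r : ℕ)
    (M : Set (Sym2 V)) : Prop :=
  IsMatchingIn G M ∧
    ∀ N, IsMatchingIn G N → ¬ SigGt r (signature rank N) (signature rank M)

/-- All edges of `G` carry a rank in `{1, …, r}`. -/
def RanksBounded (G : SimpleGraph V) (rank : Sym2 V → ℕ) (r : ℕ) : Prop :=
  ∀ e ∈ G.edgeSet, 1 ≤ rank e ∧ rank e ≤ r

/-!
Let `c` be the component of `a` in the graph with edge set `M ∆ M'`. The edges of `M ∆ M'`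
outside `c` avoid `a`, so they can be exchanged between `M` and `M'` inside both `G` and `H`;
rank-maximality of both matchings then forces equal signatures, hence equally many edges, outside
`c`. Inside `c`, the vertex `a` is covered by `M` only. Being connected, `c` has at most
`|M ∩ E(c)| + |M' ∩ E(c)| + 1` vertices, of which `M` covers `2 |M ∩ E(c)|` and `M'` covers
`2 |M' ∩ E(c)|` other than `a`; so `|M' ∩ E(c)| ≤ |M ∩ E(c)| ≤ |M' ∩ E(c)| + 1`.
-/
open scoped symmDiff

def edgesMeeting (S : Set V) : Set (Sym2 V) := {e | ∃ v ∈ e, v ∈ S}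

namespace SimpleGraph

lemma edgeSet_fromEdgeSet_of_subset {G : SimpleGraph V} {D : Set (Sym2 V)}
    (hD : D ⊆ G.edgeSet) : (fromEdgeSet D).edgeSet = D := by
  rw [edgeSet_fromEdgeSet, sdiff_eq_left]
  exact Set.disjoint_left.2 fun e heD hdiag => G.not_isDiag_of_mem_edgeSet (hD heD) hdiag

namespace ConnectedComponent

variable {Γ : SimpleGraph V}

lemma mem_supp_of_mem_edgeSet (c : Γ.ConnectedComponent) {e : Sym2 V} (he : e ∈ Γ.edgeSet)
    {v w : V} (hv : v ∈ e) (hw : w ∈ e) (hvc : v ∈ c.supp) : w ∈ c.supp := by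
  induction e using Sym2.ind with
  | _ x y =>
    rw [Sym2.mem_iff] at hv hw
    rcases hv with rfl | rfl <;> rcases hw with rfl | rfl
    all_goals first
      | exact hvc
      | exact c.mem_supp_of_adj_mem_supp hvc he
      | exact c.mem_supp_of_adj_mem_supp hvc he.symm

lemma mem_edgesMeeting_of_mem_edgeSet (c : Γ.ConnectedComponent) {e f : Sym2 V}
    (he : e ∈ Γ.edgeSet) (heS : e ∈ edgesMeeting c.supp) {v : V} (hve : v ∈ e) (hvf : v ∈ f) :
    f ∈ edgesMeeting c.supp :=
  let ⟨_, hwe, hwS⟩ := heS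
  ⟨v, hvf, c.mem_supp_of_mem_edgeSet he hwe hve hwS⟩

lemma ncard_supp_le [Finite V] (c : Γ.ConnectedComponent) :
    c.supp.ncard ≤ (Γ.edgeSet ∩ edgesMeeting c.supp).ncard + 1 := by
  have hedges : c.toSimpleGraph.spanningCoe.edgeSet = Γ.edgeSet ∩ edgesMeeting c.supp := by
    ext e
    induction e using Sym2.ind with
    | _ x y =>
      simp only [edgesMeeting, mem_edgeSet, adj_spanningCoe_toSimpleGraph, Set.mem_inter_iff,
        Set.mem_ofPred_eq, Sym2.mem_iff, exists_eq_or_imp, exists_eq_left]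
      exact ⟨fun h => ⟨h.2, Or.inl h.1⟩, fun ⟨h, hx⟩ => hx.elim (⟨·, h⟩)
        fun hy => ⟨c.mem_supp_of_adj_mem_supp hy h.symm, h⟩⟩
  have hcard := c.connected_toSimpleGraph.card_vert_le_card_edgeSet_add_one
  rw [← hedges, edgeSet_map, Set.ncard_image_of_injective _ (Function.Embedding.injective _),
    ← Nat.card_coe_set_eq]
  exact hcard

end ConnectedComponent

end SimpleGraph

section Matching

variable {G H : SimpleGraph V} {M N C : Set (Sym2 V)}

lemma IsMatchingIn.mono (hM : IsMatchingIn G M) (hNM : N ⊆ M) : IsMatchingIn G N :=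
  ⟨hNM.trans hM.1, fun e he f hf => hM.2 e (hNM he) f (hNM hf)⟩

lemma IsMatchingIn.two_mul_ncard_le [Finite V] (hM : IsMatchingIn G M) {S : Set V}
    (hS : ∀ e ∈ M, ∀ v ∈ e, v ∈ S) : 2 * M.ncard ≤ S.ncard := by
  classical
  have := Fintype.ofFinite V
  have hdisj : (M.toFinset : Set (Sym2 V)).PairwiseDisjoint Sym2.toFinset := by
    intro e he f hf hne
    simp only [Set.coe_toFinset] at he hf
    exact Finset.disjoint_left.2 fun v hve hvf =>
      hM.2 e he f hf hne v (Sym2.mem_toFinset.1 hve) (Sym2.mem_toFinset.1 hvf)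
  calc 2 * M.ncard = ∑ e ∈ M.toFinset, e.toFinset.card := by
        rw [Set.ncard_eq_toFinset_card', mul_comm, Finset.sum_const_nat]
        intro e he
        exact Sym2.card_toFinset_of_not_isDiag e
          (G.not_isDiag_of_mem_edgeSet (hM.1 (Set.mem_toFinset.1 he)))
    _ = (M.toFinset.biUnion Sym2.toFinset).card := (Finset.card_biUnion hdisj).symm
    _ ≤ S.toFinset.card := Finset.card_le_card fun v hv => by
        obtain ⟨e, he, hve⟩ := Finset.mem_biUnion.1 hv
        exact Set.mem_toFinset.2 (hS e (Set.mem_toFinset.1 he) v (Sym2.mem_toFinset.1 hve))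
    _ = S.ncard := (Set.ncard_eq_toFinset_card' S).symm

lemma IsMatchingIn.diff_union_inter (hM : IsMatchingIn G M) (hN : IsMatchingIn H N)
    (hNC : N ∩ C ⊆ G.edgeSet) (hC : ∀ e ∈ M ∆ N, ∀ f ∈ C, ∀ v ∈ e, v ∈ f → e ∈ C) :
    IsMatchingIn G ((M \ C) ∪ (N ∩ C)) := by
  have hcross : ∀ e ∈ M \ C, ∀ f ∈ N ∩ C, ∀ v ∈ e, v ∉ f := by
    rintro e ⟨heM, heC⟩ f ⟨hfN, hfC⟩ v hve hvf
    by_cases heN : e ∈ N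
    · exact hN.2 e heN f hfN (fun h => heC (h ▸ hfC)) v hve hvf
    · exact heC (hC e (Set.mem_symmDiff.2 (Or.inl ⟨heM, heN⟩)) f hfC v hve hvf)
  refine ⟨Set.union_subset (Set.sdiff_subset.trans hM.1) hNC, ?_⟩
  rintro e (he | he) f (hf | hf) hne v hve hvf
  · exact hM.2 e he.1 f hf.1 hne v hve hvf
  · exact hcross e he f hf v hve hvf
  · exact hcross f hf e he v hvf hve
  · exact hN.2 e he.1 f hf.1 hne v hve hvf

lemma IsMatchingIn.edgeSet_fromEdgeSet_symmDiff (hM : IsMatchingIn G M) (hN : IsMatchingIn G N) :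
    (fromEdgeSet (M ∆ N)).edgeSet = M ∆ N :=
  edgeSet_fromEdgeSet_of_subset (Set.symmDiff_subset_union.trans (Set.union_subset hM.1 hN.1))

end Matching

section Signature

variable [Finite V] {rank : Sym2 V → ℕ} {r : ℕ}

lemma signature_union {A B : Set (Sym2 V)} (hAB : Disjoint A B) (i : ℕ) :
    signature rank (A ∪ B) i = signature rank A i + signature rank B i := by
  rw [signature, signature, signature,
    ← Set.ncard_union_eq (hAB.mono (Set.sep_subset _ _) (Set.sep_subset _ _))]
  congr 1
  ext e
  simp only [Set.mem_union, Set.mem_ofPred_eq, or_and_right]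

lemma signature_diff_union_inter (M N C : Set (Sym2 V)) (i : ℕ) :
    signature rank ((M \ C) ∪ (N ∩ C)) i + signature rank (M ∩ C) i =
      signature rank M i + signature rank (N ∩ C) i := by
  have hMC : Disjoint (M \ C) (M ∩ C) :=
    Set.disjoint_sdiff_left.mono_right Set.inter_subset_right
  have hNC : Disjoint (M \ C) (N ∩ C) :=
    Set.disjoint_sdiff_left.mono_right Set.inter_subset_right
  rw [signature_union hNC, ← Set.sdiff_union_inter M C, signature_union hMC,
    Set.sdiff_union_inter]
  ring

lemma ncard_eq_sum_signature {A : Set (Sym2 V)} (hA : ∀ e ∈ A, 1 ≤ rank e ∧ rank e ≤ r) :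
    A.ncard = ∑ i ∈ Finset.Icc 1 r, signature rank A i := by
  classical
  have := Fintype.ofFinite V
  rw [Set.ncard_eq_toFinset_card', Finset.card_eq_sum_card_fiberwise fun e he =>
    Finset.mem_Icc.2 (hA e (Set.mem_toFinset.1 he))]
  refine Finset.sum_congr rfl fun i _ => ?_
  rw [signature, ← Set.ncard_coe_finset]
  congr 1
  ext e
  simp

end Signature

lemma SigGt.of_add_eq_add {r : ℕ} {u v x y : ℕ → ℕ} (h : ∀ i, u i + x i = v i + y i)
    (hyx : SigGt r y x) : SigGt r u v := by
  obtain ⟨k, hk1, hkr, heq, hlt⟩ := hyx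
  refine ⟨k, hk1, hkr, fun j hj1 hjk => ?_, ?_⟩
  · have := h j; have := heq j hj1 hjk; omega
  · have := h k; omega

lemma eq_of_not_sigGt_of_not_sigGt {r : ℕ} {x y : ℕ → ℕ} (hxy : ¬ SigGt r x y)
    (hyx : ¬ SigGt r y x) {i : ℕ} (hi1 : 1 ≤ i) (hir : i ≤ r) : x i = y i := by
  by_contra hne
  have hex : ∃ k, 1 ≤ k ∧ k ≤ r ∧ x k ≠ y k := ⟨i, hi1, hir, hne⟩
  classical
  obtain ⟨hk1, hkr, hk⟩ := Nat.find_spec hex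
  have hbelow : ∀ j, 1 ≤ j → j < Nat.find hex → x j = y j := fun j hj1 hjk => by
    by_contra h
    exact Nat.find_min hex hjk ⟨hj1, hjk.le.trans hkr, h⟩
  rcases Nat.lt_or_gt_of_ne hk with hlt | hgt
  · exact hyx ⟨_, hk1, hkr, fun j hj1 hjk => (hbelow j hj1 hjk).symm, hlt⟩
  · exact hxy ⟨_, hk1, hkr, hbelow, hgt⟩

section RankMaximal

variable [Finite V] {G H : SimpleGraph V} {rank : Sym2 V → ℕ} {r : ℕ} {M N C : Set (Sym2 V)}

lemma IsRankMaximal.not_sigGt_signature_inter (hM : IsRankMaximal G rank r M)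
    (hN : IsMatchingIn H N) (hNC : N ∩ C ⊆ G.edgeSet)
    (hC : ∀ e ∈ M ∆ N, ∀ f ∈ C, ∀ v ∈ e, v ∈ f → e ∈ C) :
    ¬ SigGt r (signature rank (N ∩ C)) (signature rank (M ∩ C)) := fun hgt =>
  hM.2 _ (hM.1.diff_union_inter hN hNC hC)
    (SigGt.of_add_eq_add (signature_diff_union_inter M N C) hgt)

/-- The closure hypothesis `hC` says that `C` contains every component of `M ∆ N` it meets. -/
lemma IsRankMaximal.ncard_inter_eq (hM : IsRankMaximal G rank r M)
    (hN : IsRankMaximal H rank r N) (hr : RanksBounded G rank r)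
    (hNC : N ∩ C ⊆ G.edgeSet) (hMC : M ∩ C ⊆ H.edgeSet)
    (hC : ∀ e ∈ M ∆ N, ∀ f ∈ C, ∀ v ∈ e, v ∈ f → e ∈ C) :
    (M ∩ C).ncard = (N ∩ C).ncard := by
  have hC' : ∀ e ∈ N ∆ M, ∀ f ∈ C, ∀ v ∈ e, v ∈ f → e ∈ C := symmDiff_comm M N ▸ hC
  rw [ncard_eq_sum_signature fun e he => hr e (hM.1.1 he.1),
    ncard_eq_sum_signature fun e he => hr e (hNC he)]
  refine Finset.sum_congr rfl fun i hi => ?_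
  obtain ⟨hi1, hir⟩ := Finset.mem_Icc.1 hi
  exact eq_of_not_sigGt_of_not_sigGt (hN.not_sigGt_signature_inter hM.1 hMC hC')
    (hM.not_sigGt_signature_inter hN.1 hNC hC) hi1 hir

end RankMaximal

lemma ncard_inter_edgesMeeting_le [Finite V] {G : SimpleGraph V} {M N : Set (Sym2 V)}
    (hM : IsMatchingIn G M) (hN : IsMatchingIn G N) {a : V} (ha : ¬ IsMatchedBy N a)
    (c : (fromEdgeSet (M ∆ N)).ConnectedComponent) (hac : a ∈ c.supp) :
    ((N \ M) ∩ edgesMeeting c.supp).ncard ≤ ((M \ N) ∩ edgesMeeting c.supp).ncard ∧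
      ((M \ N) ∩ edgesMeeting c.supp).ncard ≤ ((N \ M) ∩ edgesMeeting c.supp).ncard + 1 := by
  set S := c.supp
  set K := edgesMeeting S
  have hΓ := hM.edgeSet_fromEdgeSet_symmDiff hN
  have hinS : ∀ e ∈ M ∆ N ∩ K, ∀ v ∈ e, v ∈ S := fun e ⟨he, _, hwe, hwS⟩ v hve =>
    c.mem_supp_of_mem_edgeSet (by rwa [hΓ]) hwe hve hwS
  have hdisj : Disjoint ((M \ N) ∩ K) ((N \ M) ∩ K) :=
    (disjoint_sdiff_sdiff).mono Set.inter_subset_left Set.inter_subset_left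
  have hsplit : M ∆ N ∩ K = ((M \ N) ∩ K) ∪ ((N \ M) ∩ K) := Set.union_inter_distrib_right _ _ _
  have hS : S.ncard ≤ ((M \ N) ∩ K).ncard + ((N \ M) ∩ K).ncard + 1 := by
    have := c.ncard_supp_le
    rwa [hΓ, hsplit, Set.ncard_union_eq hdisj] at this
  have hMS : 2 * ((M \ N) ∩ K).ncard ≤ S.ncard :=
    (hM.mono (Set.inter_subset_left.trans Set.sdiff_subset)).two_mul_ncard_le
      fun e he => hinS e ⟨Or.inl he.1, he.2⟩
  have hNS : 2 * ((N \ M) ∩ K).ncard ≤ (S \ {a}).ncard :=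
    (hN.mono (Set.inter_subset_left.trans Set.sdiff_subset)).two_mul_ncard_le
      fun e he v hve => ⟨hinS e ⟨Or.inr he.1, he.2⟩ v hve,
        fun hva => ha ⟨e, he.1.1, (Set.mem_singleton_iff.1 hva) ▸ hve⟩⟩
  rw [Set.ncard_sdiff_singleton_of_mem hac] at hNS
  have hSpos : 0 < S.ncard := (Set.ncard_pos (Set.toFinite S)).2 ⟨a, hac⟩
  omega

lemma edgeSet_eq_of_adj_iff {G H : SimpleGraph V} {a : V}
    (hH : ∀ u v, H.Adj u v ↔ G.Adj u v ∧ u ≠ a ∧ v ≠ a) :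
    H.edgeSet = {e ∈ G.edgeSet | a ∉ e} := by
  ext e
  induction e using Sym2.ind with
  | _ x y =>
    simp only [mem_edgeSet, hH, Set.mem_ofPred_eq, Sym2.mem_iff, not_or]
    grind

lemma Set.ncard_eq_diff_add_inter_add_diff {α : Type*} [Finite α] (A B K : Set α) :
    A.ncard = (A \ K).ncard + (A ∩ B ∩ K).ncard + ((A \ B) ∩ K).ncard := by
  rw [← Set.ncard_inter_add_ncard_sdiff_eq_ncard A K,
    ← Set.ncard_inter_add_ncard_sdiff_eq_ncard (A ∩ K) B, Set.inter_right_comm,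
    Set.inter_sdiff_right_comm]
  ring

theorem delete_vertex_cardinality_general [Fintype V]
    (G H : SimpleGraph V)
    (rank : Sym2 V → ℕ) (r : ℕ) (hr : RanksBounded G rank r)
    (a : V)
    (hH : ∀ u v, H.Adj u v ↔ G.Adj u v ∧ u ≠ a ∧ v ≠ a)
    (M M' : Set (Sym2 V))
    (hM : IsRankMaximal G rank r M) (hM' : IsRankMaximal H rank r M') :
    M.ncard - 1 ≤ M'.ncard ∧ M'.ncard ≤ M.ncard := by
  have hHG := edgeSet_eq_of_adj_iff hH
  have hM'G : IsMatchingIn G M' := ⟨hM'.1.1.trans (hHG ▸ Set.sep_subset _ _), hM'.1.2⟩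
  have ha : ¬ IsMatchedBy M' a := fun ⟨e, he, hae⟩ => (hHG ▸ hM'.1.1 he).2 hae
  set c := (fromEdgeSet (M ∆ M')).connectedComponentMk a
  have hac : a ∈ c.supp := ConnectedComponent.connectedComponentMk_mem
  have hΓ := hM.1.edgeSet_fromEdgeSet_symmDiff hM'G
  have hout : (M \ edgesMeeting c.supp).ncard = (M' \ edgesMeeting c.supp).ncard :=
    hM.ncard_inter_eq hM' hr (fun e he => hM'G.1 he.1)
      (fun e he => hHG ▸ ⟨hM.1.1 he.1, fun hae => he.2 ⟨a, hae, hac⟩⟩)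
      fun e he f hf v hve hvf heK =>
        hf (c.mem_edgesMeeting_of_mem_edgeSet (by rwa [hΓ]) heK hve hvf)
  obtain ⟨hle, hge⟩ := ncard_inter_edgesMeeting_le hM.1 hM'G ha c hac
  have hMsplit := Set.ncard_eq_diff_add_inter_add_diff M M' (edgesMeeting c.supp)
  have hM'split := Set.ncard_eq_diff_add_inter_add_diff M' M (edgesMeeting c.supp)
  rw [Set.inter_comm M' M] at hM'split
  omega

/-- Let `H` be obtained from `G` by deleting an applicant vertex `a`
together with all edges incident on it. If `M` is a rank-maximal matching of `G`
and `M'` is a rank-maximal matching of `H`, then `|M| - 1 ≤ |M'| ≤ |M|`. -/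
theorem delete_vertex_cardinality [Fintype V]
    (G H : SimpleGraph V) (side : V → Bool)
    (hbipG : IsBipartiteWith G side)
    (rank : Sym2 V → ℕ) (r : ℕ) (hr : RanksBounded G rank r)
    (a : V) (ha : side a = false)
    (hH : ∀ u v, H.Adj u v ↔ G.Adj u v ∧ u ≠ a ∧ v ≠ a)
    (M M' : Set (Sym2 V))
    (hM : IsRankMaximal G rank r M) (hM' : IsRankMaximal H rank r M') :
    M.ncard - 1 ≤ M'.ncard ∧ M'.ncard ≤ M.ncard :=
  delete_vertex_cardinality_general G H rank r hr a hH M M' hM hM'
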